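/- arXiv:2409.09526 — 3 statements merged into one kernel-verified Lean document; each statement's English description precedes it below -/
import Mathlib

section
/- Let M be a real symmetric positive semidefinite N×N matrix, S ⊆ {1,…,N}, and Q the block-diagonal part of M with respect to (S, Sᶜ), assumed positive definite. Let λ_1 ≤ λ_2 ≤ … ≤ λ_N be the generalized eigenvalues of (M, Q) listed in nondecreasing order with multiplicity (equivalently, the eigenvalues of the symmetric matrix Q^{−1/2} M Q^{−1/2}). Then the spectrum is symmetric about 1: λ_k + λ_{N+1−k} = 2 for every k ∈ {1,…,N}. In particular, for every real λ, dim ker(M − λ Q) = dim ker(M − (2 − λ) Q). -/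
/-!
Let `D` be the diagonal sign matrix of `S` (`+1` on `S`, `-1` off it). Conjugating by `D` flips
the sign of exactly the off-block entries, so `D Q D = Q` and `D M D = 2 Q - M`. Hence `D` carries
the pencil `M - λ Q` to `-(M - (2 - λ) Q)`: a `Q`-orthonormal eigenbasis `U` for the eigenvalues
`λ` gives the eigenbasis `D U` for `2 - λ`, so the multiset of generalized eigenvalues (the roots
of the characteristic polynomial of `Q⁻¹ M`) is invariant under `λ ↦ 2 - λ`, which reverses the
sorted list, and the kernels of `M - λ Q` and `M - (2 - λ) Q` have the same dimension.
-/

open Matrix Polynomial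

namespace Matrix

variable {n : Type*} [Fintype n] [DecidableEq n]

section SignFlip

variable {R : Type*} [CommRing R] (S : Finset n)

def blockPart (M : Matrix n n R) : Matrix n n R :=
  of fun i j => if (i ∈ S ∧ j ∈ S) ∨ (i ∉ S ∧ j ∉ S) then M i j else 0

variable (R) in
def signDiagonal : Matrix n n R :=
  diagonal fun i => if i ∈ S then 1 else -1

theorem signDiagonal_mul_self : signDiagonal R S * signDiagonal R S = 1 := by
  rw [signDiagonal, diagonal_mul_diagonal, ← diagonal_one]
  congr 1
  ext i
  split_ifs <;> simp

theorem signDiagonal_mul_mul_signDiagonal_apply (A : Matrix n n R) (i j : n) :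
    (signDiagonal R S * A * signDiagonal R S) i j =
      if (i ∈ S ∧ j ∈ S) ∨ (i ∉ S ∧ j ∉ S) then A i j else -A i j := by
  rw [signDiagonal, mul_diagonal, diagonal_mul]
  by_cases hi : i ∈ S <;> by_cases hj : j ∈ S <;> simp [hi, hj]

theorem signDiagonal_conj_blockPart (M : Matrix n n R) :
    signDiagonal R S * blockPart S M * signDiagonal R S = blockPart S M := by
  ext i j
  rw [signDiagonal_mul_mul_signDiagonal_apply, blockPart, of_apply]
  split_ifs <;> simp

theorem signDiagonal_conj (M : Matrix n n R) :
    signDiagonal R S * M * signDiagonal R S = (2 : R) • blockPart S M - M := by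
  ext i j
  rw [signDiagonal_mul_mul_signDiagonal_apply, sub_apply, smul_apply, blockPart, of_apply]
  split_ifs <;> simp; ring

end SignFlip

theorem finrank_ker_mulVecLin_mul_mul_of_isUnit {K : Type*} [Field K] (P A R : Matrix n n K)
    (hP : IsUnit P.det) (hR : IsUnit R.det) :
    Module.finrank K (LinearMap.ker (P * A * R).mulVecLin) =
      Module.finrank K (LinearMap.ker A.mulVecLin) := by
  have hPAR := LinearMap.finrank_range_add_finrank_ker (P * A * R).mulVecLin
  have hA := LinearMap.finrank_range_add_finrank_ker A.mulVecLin
  have hrank : (P * A * R).rank = A.rank := by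
    rw [rank_mul_eq_left_of_isUnit_det R _ hR, rank_mul_eq_right_of_isUnit_det P A hP]
  rw [rank, rank] at hrank
  omega

theorem roots_charpoly_diagonal {K : Type*} [Field K] (d : n → K) :
    (diagonal d).charpoly.roots = Finset.univ.val.map d := by
  rw [charpoly_diagonal, roots_prod _ _ (by simp [Finset.prod_ne_zero_iff, X_sub_C_ne_zero])]
  simp

theorem charpoly_diagonal_eq_of_mul_eq {K : Type*} [Field K] {M Q U : Matrix n n K} {d : n → K}
    (hQ : IsUnit Q.det) (hU : IsUnit U.det) (hMU : M * U = Q * U * diagonal d) :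
    (diagonal d).charpoly = (Q⁻¹ * M).charpoly := by
  have hconj : diagonal d = U⁻¹ * (Q⁻¹ * M) * U := by
    rw [Matrix.mul_assoc, Matrix.mul_assoc, hMU]
    simp only [← Matrix.mul_assoc, nonsing_inv_mul _ hQ, nonsing_inv_mul _ hU, Matrix.one_mul]
  rw [hconj]
  exact charpoly_units_conj' (nonsingInvUnit U hU) (Q⁻¹ * M)

theorem map_univ_eq_of_mul_eq_mul_mul_diagonal {K : Type*} [Field K] {M Q U V : Matrix n n K}
    {a b : n → K} (hQ : IsUnit Q.det) (hU : IsUnit U.det) (hV : IsUnit V.det)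
    (hMU : M * U = Q * U * diagonal a) (hMV : M * V = Q * V * diagonal b) :
    Finset.univ.val.map a = Finset.univ.val.map b := by
  rw [← roots_charpoly_diagonal, ← roots_charpoly_diagonal,
    charpoly_diagonal_eq_of_mul_eq hQ hU hMU, charpoly_diagonal_eq_of_mul_eq hQ hV hMV]

theorem mul_mul_eq_mul_mul_diagonal_const_sub {R : Type*} [CommRing R] {D Q M U : Matrix n n R}
    {d : n → R} (c : R) (hD : D * D = 1) (hDQ : D * Q * D = Q) (hDM : D * M * D = c • Q - M)
    (hMU : M * U = Q * U * diagonal d) :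
    M * (D * U) = Q * (D * U) * diagonal fun i => c - d i := by
  have hcomm : D * Q = Q * D := by
    calc D * Q = D * Q * D * D := by rw [Matrix.mul_assoc (D * Q), hD, Matrix.mul_one]
      _ = Q * D := by rw [hDQ]
  calc M * (D * U) = D * (D * M * D) * U := by
        simp only [← Matrix.mul_assoc, hD, Matrix.one_mul]
    _ = D * (c • (Q * U) - Q * U * diagonal d) := by
        rw [hDM, Matrix.mul_assoc, Matrix.sub_mul, Matrix.smul_mul, hMU]
    _ = Q * (D * U) * (c • 1 - diagonal d) := by
        simp only [Matrix.mul_sub, Matrix.mul_smul, Matrix.mul_one, ← Matrix.mul_assoc, hcomm]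
    _ = Q * (D * U) * diagonal fun i => c - d i := by
        rw [smul_one_eq_diagonal, diagonal_sub]

theorem finrank_ker_sub_const_sub_smul {K : Type*} [Field K] {D Q M : Matrix n n K} (c μ : K)
    (hD : D * D = 1) (hDQ : D * Q * D = Q) (hDM : D * M * D = c • Q - M) :
    Module.finrank K (LinearMap.ker (M - (c - μ) • Q).mulVecLin) =
      Module.finrank K (LinearMap.ker (M - μ • Q).mulVecLin) := by
  have hD' : IsUnit D.det := isUnit_det_of_left_inverse hD
  have hnegD : IsUnit (-D).det := isUnit_det_of_left_inverse (by rw [neg_mul_neg, hD])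
  have hconj : M - (c - μ) • Q = -D * (M - μ • Q) * D := by
    rw [neg_mul, Matrix.neg_mul, Matrix.mul_sub, Matrix.sub_mul, Matrix.mul_smul,
      Matrix.smul_mul, hDM, hDQ]
    module
  rw [hconj, finrank_ker_mulVecLin_mul_mul_of_isUnit _ _ _ hnegD hD']

end Matrix

theorem Fin.eq_of_monotone_of_map_univ_eq {α : Type*} [LinearOrder α] {N : ℕ} {f g : Fin N → α}
    (hf : Monotone f) (hg : Monotone g)
    (h : Finset.univ.val.map f = Finset.univ.val.map g) : f = g := by
  refine List.ofFn_injective (List.Perm.eq_of_sortedLE hf.sortedLE_ofFn hg.sortedLE_ofFn ?_)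
  rwa [← Multiset.coe_eq_coe, ← Fin.univ_val_map, ← Fin.univ_val_map]

theorem spectral_folding_spectrum_symmetric_general
    {N : ℕ}
    (M : Matrix (Fin N) (Fin N) ℝ)
    (S : Finset (Fin N))
    (Q : Matrix (Fin N) (Fin N) ℝ)
    (hQ : ∀ i j, Q i j =
      if (i ∈ S ∧ j ∈ S) ∨ (i ∉ S ∧ j ∉ S) then M i j else 0)
    (hQpd : Q.PosDef)
    (lam : Fin N → ℝ) (hlam : Monotone lam)
    (U : Matrix (Fin N) (Fin N) ℝ)
    (hUQU : Uᵀ * Q * U = 1)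
    (hMU : M * U = Q * U * Matrix.diagonal lam) :
    (∀ k : Fin N, lam k + lam k.rev = 2) ∧
      (∀ μ : ℝ,
        Module.finrank ℝ (LinearMap.ker (M - μ • Q).mulVecLin) =
          Module.finrank ℝ (LinearMap.ker (M - (2 - μ) • Q).mulVecLin)) := by
  obtain rfl : Q = blockPart S M := ext hQ
  have hD := signDiagonal_mul_self (R := ℝ) S
  have hDQ := signDiagonal_conj_blockPart S M
  have hDM := signDiagonal_conj S M
  have hU : IsUnit U.det := isUnit_det_of_left_inverse hUQU
  have hDU : IsUnit (signDiagonal ℝ S * U).det := by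
    rw [det_mul]
    exact (isUnit_det_of_left_inverse hD).mul hU
  have hspec := map_univ_eq_of_mul_eq_mul_mul_diagonal ((isUnit_iff_isUnit_det _).mp hQpd.isUnit)
    hU hDU hMU (mul_mul_eq_mul_mul_diagonal_const_sub 2 hD hDQ hDM hMU)
  have hfold : lam = fun k => 2 - lam k.rev := by
    refine Fin.eq_of_monotone_of_map_univ_eq hlam ?_ ?_
    · exact fun a b hab => sub_le_sub_left (hlam (Fin.rev_anti hab)) 2
    · calc Finset.univ.val.map lam = Finset.univ.val.map fun i => 2 - lam i := hspec
        _ = (Finset.univ.val.map Fin.revPerm).map fun i => 2 - lam i := by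
          rw [Multiset.map_univ_val_equiv]
        _ = Finset.univ.val.map fun k : Fin N => 2 - lam k.rev := by
          rw [Multiset.map_map]
          rfl
  refine ⟨fun k => ?_, fun μ => ?_⟩
  · linarith [congrFun hfold k]
  · exact (finrank_ker_sub_const_sub_smul 2 μ hD hDQ hDM).symm

/-- The generalized spectrum of (M, Q(S)) is symmetric about 1:
if λ₁ ≤ … ≤ λ_N are the generalized eigenvalues (encoded by a sorted
Q-orthonormal generalized eigendecomposition M U = Q U Λ, Uᵀ Q U = I),
then λ_k + λ_{N+1−k} = 2 for all k, and for every real λ the kernels of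
M − λ Q and M − (2 − λ) Q have the same dimension. -/
theorem spectral_folding_spectrum_symmetric
    {N : ℕ} (hN : 1 ≤ N)
    (M : Matrix (Fin N) (Fin N) ℝ) (hM : M.PosSemidef)
    (S : Finset (Fin N))
    (Q : Matrix (Fin N) (Fin N) ℝ)
    (hQ : ∀ i j, Q i j =
      if (i ∈ S ∧ j ∈ S) ∨ (i ∉ S ∧ j ∉ S) then M i j else 0)
    (hQpd : Q.PosDef)
    (lam : Fin N → ℝ) (hlam : Monotone lam)
    (U : Matrix (Fin N) (Fin N) ℝ)
    (hUQU : Uᵀ * Q * U = 1)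
    (hMU : M * U = Q * U * Matrix.diagonal lam) :
    (∀ k : Fin N, lam k + lam k.rev = 2) ∧
      (∀ μ : ℝ,
        Module.finrank ℝ (LinearMap.ker (M - μ • Q).mulVecLin) =
          Module.finrank ℝ (LinearMap.ker (M - (2 - μ) • Q).mulVecLin)) :=
  spectral_folding_spectrum_symmetric_general M S Q hQ hQpd lam hlam U hUQU hMU
end

section
/- (Key identity for Theorem 3) Under the spectral-folding setup with folding pairing u_{N+1−k} = J u_k and |L| = |S|, one has −(Q_S)⁻¹ M_{SSᶜ} = 2 U_{SL} (I − Λ_L) U_{SᶜL}ᵀ Q_{Sᶜ}, where Λ_L = diag(λ_k)_{k∈L}; i.e., the full-spectrum expansion U_S(I−Λ)U_{Sᶜ}ᵀQ_{Sᶜ} collapses to twice its low-frequency part. -/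
/-!
Since `Uᵀ Q U = 1`, also `U Uᵀ Q = 1`, and the eigen-equation gives
`Q (U (1 - Λ) Uᵀ) Q = Q - M`. The `(S, Sᶜ)` block of `Q - M` is `-M_{SSᶜ}`, while `Q` is block
diagonal, so that block equals `Q_S [U (1 - Λ) Uᵀ]_{SSᶜ} Q_{Sᶜ}`.

Folding: `J M J = 2Q - M`, so the Rayleigh quotients give
`λ_{N+1-k} = (J u_k)ᵀ M (J u_k) = u_kᵀ (2Q - M) u_k = 2 - λ_k`. In an `(S, Sᶜ)` entry of
`U (1 - Λ) Uᵀ` the summands of `k` and its mirror coincide (two sign flips), those with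
`λ_k = 1` vanish, and the mirror exchanges `λ < 1` with `λ > 1`: the sum is twice its
low-frequency part.
-/

open Matrix

theorem Function.Involutive.sum_mul_one_sub_mul_eq_two_mul_sum_lt_one {ι : Type*} [Fintype ι]
    {σ : ι → ι} (hσ : Function.Involutive σ) {c a b : ι → ℝ} (hc : ∀ k, c (σ k) = 2 - c k)
    (ha : ∀ k, a (σ k) = a k) (hb : ∀ k, b (σ k) = -b k) :
    ∑ k, a k * (1 - c k) * b k = 2 * ∑ k : {k // c k < 1}, a k * (1 - c k) * b k := by
  set t : ι → ℝ := fun k => a k * (1 - c k) * b k with ht_def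
  have ht : ∀ k, t (σ k) = t k := fun k => by simp only [ht_def, ha, hb, hc]; ring
  have hsplit : ∀ k, t k = (if c k < 1 then t k else 0) + if c (σ k) < 1 then t (σ k) else 0 := by
    intro k
    rw [ht, hc]
    rcases lt_trichotomy (c k) 1 with h | h | h
    · simp [h, (by linarith : ¬2 - c k < 1)]
    · simp [ht_def, h]
    · simp [h.not_gt, (by linarith : 2 - c k < 1)]
  calc ∑ k, t k
      = ∑ k, (if c k < 1 then t k else 0) + ∑ k, if c (σ k) < 1 then t (σ k) else 0 := by
        rw [← Finset.sum_add_distrib]; exact Finset.sum_congr rfl fun k _ => hsplit k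
    _ = 2 * ∑ k, if c k < 1 then t k else 0 := by
        rw [Fintype.sum_bijective σ hσ.bijective _ (fun k => if c k < 1 then t k else 0)
          fun _ => rfl]
        ring
    _ = 2 * ∑ k : {k // c k < 1}, t k := by
        rw [← Finset.sum_filter, Finset.sum_subtype _ fun _ => Finset.mem_filter_univ _]

namespace Matrix

variable {ι R : Type*} [Fintype ι] [DecidableEq ι]

section CommRing

variable [CommRing R] {M Q U : Matrix ι ι R} {lam : ι → R}

theorem transpose_mul_mul_eq_diagonal (hUQU : Uᵀ * Q * U = 1)
    (hMU : M * U = Q * U * diagonal lam) : Uᵀ * M * U = diagonal lam := by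
  rw [Matrix.mul_assoc, hMU, ← Matrix.mul_assoc, ← Matrix.mul_assoc, hUQU, Matrix.one_mul]

theorem mul_mul_one_sub_diagonal_mul_transpose_mul (hUQU : Uᵀ * Q * U = 1)
    (hMU : M * U = Q * U * diagonal lam) :
    Q * (U * (1 - diagonal lam) * Uᵀ) * Q = Q - M := by
  have hU : U * (Uᵀ * Q) = 1 := mul_eq_one_comm.mp hUQU
  calc Q * (U * (1 - diagonal lam) * Uᵀ) * Q
      = Q * (U * (Uᵀ * Q)) - M * U * Uᵀ * Q := by rw [hMU]; noncomm_ring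
    _ = Q * (U * (Uᵀ * Q)) - M * (U * (Uᵀ * Q)) := by noncomm_ring
    _ = Q - M := by rw [hU, Matrix.mul_one, Matrix.mul_one]

theorem apply_eq_two_sub_of_submatrix_eq_mul {J : Matrix ι ι R} {σ : ι → ι}
    (hUQU : Uᵀ * Q * U = 1) (hMU : M * U = Q * U * diagonal lam)
    (hJMJ : Jᵀ * M * J = 2 • Q - M) (hσ : U.submatrix id σ = J * U) (k : ι) :
    lam (σ k) = 2 - lam k := by
  have hD := transpose_mul_mul_eq_diagonal hUQU hMU
  have hW : (U.submatrix id σ)ᵀ * M * U.submatrix id σ = 2 • (1 : Matrix ι ι R) - diagonal lam :=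
    calc (U.submatrix id σ)ᵀ * M * U.submatrix id σ = Uᵀ * (Jᵀ * M * J) * U := by
          rw [hσ, transpose_mul]; noncomm_ring
      _ = 2 • (Uᵀ * Q * U) - Uᵀ * M * U := by rw [hJMJ]; noncomm_ring
      _ = 2 • (1 : Matrix ι ι R) - diagonal lam := by rw [hUQU, hD]
  calc lam (σ k) = (Uᵀ * M * U) (σ k) (σ k) := by rw [hD, diagonal_apply_eq]
    _ = ((U.submatrix id σ)ᵀ * M * U.submatrix id σ) k k := by
      simp only [mul_apply, transpose_apply, submatrix_apply, id]
    _ = 2 - lam k := by rw [hW]; simp [ofNat_apply]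

omit [DecidableEq ι] in
theorem toBlock_mul_mul_of_toBlock_eq_zero (p : ι → Prop) [DecidablePred p] {X : Matrix ι ι R}
    (hQ : Q.toBlock p (fun i => ¬p i) = 0) :
    (Q * X * Q).toBlock p (fun i => ¬p i) =
      Q.toBlock p p * X.toBlock p (fun i => ¬p i) * Q.toBlock (fun i => ¬p i) (fun i => ¬p i) := by
  rw [toBlock_mul_eq_add _ p, hQ, Matrix.mul_zero, zero_add, toBlock_mul_eq_add _ p, hQ,
    Matrix.zero_mul, add_zero]

theorem transpose_signDiagonal_mul_mul (p : ι → Prop) [DecidablePred p]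
    (hQ : ∀ i j, Q i j = if (p i ∧ p j) ∨ (¬p i ∧ ¬p j) then M i j else 0) :
    (diagonal fun i => if p i then (1 : R) else -1)ᵀ * M *
      diagonal (fun i => if p i then (1 : R) else -1) = 2 • Q - M := by
  ext i j
  rw [mul_diagonal, diagonal_transpose, diagonal_mul, sub_apply, smul_apply, hQ]
  by_cases hi : p i <;> by_cases hj : p j <;> simp [hi, hj] <;> ring

end CommRing

theorem mul_one_sub_diagonal_mul_transpose_apply {R m n : Type*} [CommRing R]
    (A : Matrix m ι R) (B : Matrix n ι R) (d : ι → R) (i : m) (j : n) :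
    (A * ((1 : Matrix ι ι R) - diagonal d) * Bᵀ) i j = ∑ k, A i k * (1 - d k) * B j k := by
  rw [← diagonal_one, diagonal_sub, mul_apply]
  simp only [mul_diagonal, transpose_apply]

theorem toBlock_mul_one_sub_diagonal_mul_transpose {σ : ι → ι} (hσ : Function.Involutive σ)
    {U : Matrix ι ι ℝ} {lam : ι → ℝ} (hlam : ∀ k, lam (σ k) = 2 - lam k)
    (p : ι → Prop) [DecidablePred p]
    (hU : U.submatrix id σ = diagonal (fun i => if p i then 1 else -1) * U) :
    (U * (1 - diagonal lam) * Uᵀ).toBlock p (fun i => ¬p i) =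
      (2 : ℝ) • (U.toBlock p (fun k => lam k < 1) *
        (1 - diagonal fun k : {k // lam k < 1} => lam k) *
        (U.toBlock (fun i => ¬p i) (fun k => lam k < 1))ᵀ) := by
  have hUσ : ∀ i k, U i (σ k) = (if p i then 1 else -1) * U i k := fun i k => by
    simpa [diagonal_mul] using congrFun (congrFun hU i) k
  ext i j
  rw [smul_apply, toBlock_apply, mul_one_sub_diagonal_mul_transpose_apply,
    mul_one_sub_diagonal_mul_transpose_apply, smul_eq_mul]
  exact hσ.sum_mul_one_sub_mul_eq_two_mul_sum_lt_one hlam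
    (fun k => by simp [hUσ, i.2]) (fun k => by simp [hUσ, j.2])

end Matrix

theorem low_freq_collapse_identity_general
    {N : ℕ}
    (M : Matrix (Fin N) (Fin N) ℝ)
    (S : Finset (Fin N))
    (J : Matrix (Fin N) (Fin N) ℝ)
    (hJ : J = Matrix.diagonal (fun i => if i ∈ S then (1 : ℝ) else -1))
    (Q : Matrix (Fin N) (Fin N) ℝ)
    (hQ : ∀ i j, Q i j =
      if (i ∈ S ∧ j ∈ S) ∨ (i ∉ S ∧ j ∉ S) then M i j else 0)
    (hQpd : Q.PosDef)
    (lam : Fin N → ℝ)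
    (U : Matrix (Fin N) (Fin N) ℝ)
    (hUQU : Uᵀ * Q * U = 1)
    (hMU : M * U = Q * U * Matrix.diagonal lam)
    (hfold : ∀ k : Fin N, (fun i => U i k.rev) = J.mulVec (fun i => U i k))
    (QS : Matrix {i : Fin N // i ∈ S} {i : Fin N // i ∈ S} ℝ)
    (hQS : QS = M.submatrix Subtype.val Subtype.val)
    (QSc : Matrix {i : Fin N // i ∉ S} {i : Fin N // i ∉ S} ℝ)
    (hQSc : QSc = M.submatrix Subtype.val Subtype.val)
    (USL : Matrix {i : Fin N // i ∈ S} {k : Fin N // lam k < 1} ℝ)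
    (hUSL : USL = U.submatrix Subtype.val Subtype.val)
    (UScL : Matrix {i : Fin N // i ∉ S} {k : Fin N // lam k < 1} ℝ)
    (hUScL : UScL = U.submatrix Subtype.val Subtype.val) :
    -(QS⁻¹ * M.submatrix (Subtype.val : {i : Fin N // i ∈ S} → Fin N)
        (Subtype.val : {i : Fin N // i ∉ S} → Fin N)) =
      (2 : ℝ) • (USL *
        ((1 : Matrix {k : Fin N // lam k < 1} {k : Fin N // lam k < 1} ℝ) -
          Matrix.diagonal (fun k : {k : Fin N // lam k < 1} => lam k.val)) *
        UScLᵀ * QSc) := by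
  have hUrev : U.submatrix id Fin.rev = J * U := by ext i k; exact congrFun (hfold k) i
  have hJMJ : Jᵀ * M * J = 2 • Q - M := hJ ▸ transpose_signDiagonal_mul_mul (· ∈ S) hQ
  have hlam : ∀ k, lam k.rev = 2 - lam k :=
    apply_eq_two_sub_of_submatrix_eq_mul hUQU hMU hJMJ hUrev
  have hQS' : QS = Q.toBlock (· ∈ S) (· ∈ S) := by
    ext i j; simp [hQS, hQ, toBlock_apply, i.2, j.2]
  have hQSc' : QSc = Q.toBlock (· ∉ S) (· ∉ S) := by
    ext i j; simp [hQSc, hQ, toBlock_apply, i.2, j.2]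
  have hQoff : Q.toBlock (· ∈ S) (· ∉ S) = 0 := by
    ext i j; simp [hQ, toBlock_apply, i.2, j.2]
  have hMoff : (Q - M).toBlock (· ∈ S) (· ∉ S) = -M.toBlock (· ∈ S) (· ∉ S) := by
    ext i j; simp [hQ, toBlock_apply, i.2, j.2]
  have hQS_det : IsUnit QS.det := by
    rw [hQS']; exact (hQpd.submatrix Subtype.val_injective).det_pos.ne'.isUnit
  have hblock := toBlock_mul_mul_of_toBlock_eq_zero (· ∈ S)
    (X := U * (1 - diagonal lam) * Uᵀ) hQoff
  rw [mul_mul_one_sub_diagonal_mul_transpose_mul hUQU hMU, hMoff, ← hQS', ← hQSc',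
    toBlock_mul_one_sub_diagonal_mul_transpose Fin.rev_involutive hlam (· ∈ S) (hJ ▸ hUrev)]
    at hblock
  -- `↥S` carries two `Fintype` instances: the generic subtype one and the `Finset` one.
  rw [Subsingleton.elim (Subtype.fintype fun x => x ∈ S) (Finset.Subtype.fintype S)] at hblock
  subst hUSL hUScL
  change -(QS⁻¹ * M.toBlock (· ∈ S) (· ∉ S)) = _
  rw [← Matrix.mul_neg, hblock, ← Matrix.mul_assoc, ← Matrix.mul_assoc, nonsing_inv_mul _ hQS_det,
    Matrix.one_mul, Matrix.smul_mul]
  rfl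

/-- Key identity for Theorem 3: under the spectral-folding setup with folding
pairing u_{N+1−k} = J u_k and |L| = |S|, one has
−(Q_S)⁻¹ M_{SSᶜ} = 2 U_{SL} (I − Λ_L) U_{SᶜL}ᵀ Q_{Sᶜ}. -/
theorem low_freq_collapse_identity
    {N : ℕ} (hN : 1 ≤ N)
    (M : Matrix (Fin N) (Fin N) ℝ) (hM : M.PosSemidef)
    (S : Finset (Fin N))
    (J : Matrix (Fin N) (Fin N) ℝ)
    (hJ : J = Matrix.diagonal (fun i => if i ∈ S then (1 : ℝ) else -1))
    (Q : Matrix (Fin N) (Fin N) ℝ)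
    (hQ : ∀ i j, Q i j =
      if (i ∈ S ∧ j ∈ S) ∨ (i ∉ S ∧ j ∉ S) then M i j else 0)
    (hQpd : Q.PosDef)
    (lam : Fin N → ℝ) (hlam : Monotone lam)
    (U : Matrix (Fin N) (Fin N) ℝ)
    (hUQU : Uᵀ * Q * U = 1)
    (hMU : M * U = Q * U * Matrix.diagonal lam)
    (hfold : ∀ k : Fin N, (fun i => U i k.rev) = J.mulVec (fun i => U i k))
    (hcard : Fintype.card {k : Fin N // lam k < 1} =
      Fintype.card {i : Fin N // i ∈ S})
    (QS : Matrix {i : Fin N // i ∈ S} {i : Fin N // i ∈ S} ℝ)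
    (hQS : QS = M.submatrix Subtype.val Subtype.val)
    (QSc : Matrix {i : Fin N // i ∉ S} {i : Fin N // i ∉ S} ℝ)
    (hQSc : QSc = M.submatrix Subtype.val Subtype.val)
    (USL : Matrix {i : Fin N // i ∈ S} {k : Fin N // lam k < 1} ℝ)
    (hUSL : USL = U.submatrix Subtype.val Subtype.val)
    (UScL : Matrix {i : Fin N // i ∉ S} {k : Fin N // lam k < 1} ℝ)
    (hUScL : UScL = U.submatrix Subtype.val Subtype.val) :
    -(QS⁻¹ * M.submatrix (Subtype.val : {i : Fin N // i ∈ S} → Fin N)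
        (Subtype.val : {i : Fin N // i ∉ S} → Fin N)) =
      (2 : ℝ) • (USL *
        ((1 : Matrix {k : Fin N // lam k < 1} {k : Fin N // lam k < 1} ℝ) -
          Matrix.diagonal (fun k : {k : Fin N // lam k < 1} => lam k.val)) *
        UScLᵀ * QSc) :=
  low_freq_collapse_identity_general M S J hJ Q hQ hQpd lam U hUQU hMU hfold QS hQS QSc hQSc USL
    hUSL UScL hUScL
end

section
/- (Theorem 3) Let Σ be a real symmetric positive definite N×N matrix, M = Σ⁻¹, S ⊆ {1,…,N}, Q the block-diagonal part of M with respect to (S, Sᶜ), and U a Q-orthonormal generalized eigenbasis of (M,Q) with folding pairing u_{N+1−k} = J u_k and |L| = |S|. Then the optimal linear (MMSE) estimator of x_S from x_{Sᶜ} under a zero-mean Gaussian with covariance Σ is a low-frequency subspace reconstruction with respect to the sampling-set-adaptive GFT: Σ_{SSᶜ} (Σ_{SᶜSᶜ})⁻¹ = 2 U_{SL} (I − Λ_L) U_{SᶜL}ᵀ Q_{Sᶜ}. -/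
/-!
Since `UᵀQU = 1` and `MU = QUΛ`, the covariance is `Σ = M⁻¹ = UΛ⁻¹Uᵀ`. Conjugation by `J` sends
`M` to `2Q − M` and fixes `Q`, so `J u_k` is a generalized eigenvector for `2 − λ_k`; the folding
`J u_k = u_{N+1−k}` therefore forces `λ_{N+1−k} = 2 − λ_k`. As `Q_{Sᶜ}` is the `Sᶜ`-block of
`Q (1 − J) / 2`, this gives `U_{SᶜL}ᵀ Q_{Sᶜ} Σ_{SᶜSᶜ} = diag(1 / (λ_k (2 − λ_k))) U_{SᶜL}ᵀ`.
Finally, `Σ_{ij} = ∑_k u_k(i) u_k(j) / λ_k` for `i ∈ S`, `j ∉ S` is summed over the folded pairs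
`{k, N+1−k}`: the product `u_k(i) u_k(j)` changes sign under folding, so a pair with `λ_k < 1`
contributes `2 (1 − λ_k) u_k(i) u_k(j) / (λ_k (2 − λ_k))` and a pair with `λ_k = 1` cancels.
-/

open Matrix

theorem sum_div_eq_two_mul_sum_lt_one {ι K : Type*} [Fintype ι] [Field K] [LinearOrder K]
    [IsStrictOrderedRing K] (σ : Equiv.Perm ι) (φ f : ι → K) (hφ : ∀ k, φ (σ k) = 2 - φ k)
    (hf : ∀ k, f (σ k) = -f k) (hφ₀ : ∀ k, φ k ≠ 0) :
    ∑ k, f k / φ k = 2 * ∑ k : {k // φ k < 1}, (1 - φ k) * f k / (φ k * (2 - φ k)) := by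
  set h : ι → K := fun k => (1 - φ k) * f k / (φ k * (2 - φ k)) with h_def
  have hφ₂ : ∀ k, 2 - φ k ≠ 0 := fun k => hφ k ▸ hφ₀ (σ k)
  have h_pair : ∀ k, f k / φ k + f (σ k) / φ (σ k) = 2 * h k := fun k => by
    rw [hφ, hf, h_def]
    field_simp [hφ₀ k, hφ₂ k]
    ring
  have h_comp : ∀ k, h (σ k) = h k := fun k => by
    simp only [h_def, hφ, hf]
    ring
  have h_split : ∀ k, h k = (if φ k < 1 then h k else 0) + (if 1 < φ k then h k else 0) := by
    intro k
    rcases lt_trichotomy (φ k) 1 with hk | hk | hk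
    · simp [hk, hk.not_gt]
    · simp [h_def, hk]
    · simp [hk, hk.not_gt]
  have h_upper : ∑ k, (if 1 < φ k then h k else 0) = ∑ k, (if φ k < 1 then h k else 0) := by
    rw [← Equiv.sum_comp σ]
    simp only [hφ, h_comp, lt_sub_comm]
    norm_num
  calc ∑ k, f k / φ k = 2⁻¹ * ∑ k, (f k / φ k + f (σ k) / φ (σ k)) := by
        rw [Finset.sum_add_distrib, Equiv.sum_comp σ (fun k => f k / φ k)]
        ring
    _ = ∑ k, h k := by simp only [h_pair, ← Finset.mul_sum]; ring
    _ = 2 * ∑ k, (if φ k < 1 then h k else 0) := by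
        rw [Finset.sum_congr rfl fun k _ => h_split k, Finset.sum_add_distrib, h_upper]
        ring
    _ = 2 * ∑ k : {k // φ k < 1}, h k := by
        rw [← Finset.sum_filter, Finset.sum_subtype (p := fun k => φ k < 1) _ (by simp) h]

theorem submatrix_mul_submatrix_subtype {R m o l r ι : Type*} [Semiring R] [Fintype m]
    [DecidableEq m] (p : m → Prop) [DecidablePred p] (A : Matrix l m R) (B : Matrix m o R)
    (f : r → l) (g : ι → o) :
    A.submatrix f (Subtype.val : Subtype p → m) *
        (B.submatrix Subtype.val g : Matrix (Subtype p) ι R) =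
      (A * diagonal (fun i => if p i then (1 : R) else 0) * B).submatrix f g := by
  ext i j
  simp only [mul_apply, submatrix_apply, diagonal_apply, mul_ite, mul_one, mul_zero,
    Finset.sum_ite_eq', Finset.mem_univ, if_true, ite_mul, zero_mul]
  rw [← Finset.sum_filter]
  exact Finset.sum_subtype _ (by simp) (fun a => A (f i) a * B a (g j)) |>.symm

section Blocks

variable {n R : Type*} [DecidableEq n] [CommRing R] (S : Finset n)

def blockSign : Matrix n n R :=
  diagonal fun i => if i ∈ S then 1 else -1

def blockDiagPart (M : Matrix n n R) : Matrix n n R :=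
  of fun i j => if (i ∈ S ∧ j ∈ S) ∨ (i ∉ S ∧ j ∉ S) then M i j else 0

theorem transpose_blockSign : (blockSign S : Matrix n n R)ᵀ = blockSign S :=
  diagonal_transpose _

variable [Fintype n] (M : Matrix n n R)

theorem blockSign_mul_self : blockSign S * blockSign S = (1 : Matrix n n R) := by
  rw [blockSign, diagonal_mul_diagonal, ← diagonal_one]
  congr 1
  ext i
  split_ifs <;> norm_num

theorem blockSign_mul_blockDiagPart :
    blockSign S * blockDiagPart S M = blockDiagPart S M * blockSign S := by
  ext i j
  by_cases hi : i ∈ S <;> by_cases hj : j ∈ S <;> simp [blockSign, blockDiagPart, hi, hj]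

theorem blockSign_mul_mul_blockSign :
    blockSign S * M * blockSign S = (2 : R) • blockDiagPart S M - M := by
  ext i j
  by_cases hi : i ∈ S <;> by_cases hj : j ∈ S <;>
    simp [blockSign, blockDiagPart, hi, hj] <;> ring

theorem two_smul_diagonal_compl_mul_mul_diagonal_compl :
    (2 : R) • (diagonal (fun i => if i ∉ S then 1 else 0) * M *
      diagonal (fun i => if i ∉ S then 1 else 0)) = blockDiagPart S M * (1 - blockSign S) := by
  ext i j
  by_cases hi : i ∈ S <;> by_cases hj : j ∈ S <;>
    simp [blockSign, blockDiagPart, hi, hj, mul_sub, Matrix.sub_apply]; ring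

end Blocks

variable {n K : Type*} [Fintype n] [DecidableEq n] [Field K]

structure IsGenEigenbasis (M Q U : Matrix n n K) (lam : n → K) : Prop where
  transpose_mul_mul_self : Uᵀ * Q * U = 1
  mul_eq : M * U = Q * U * diagonal lam

namespace IsGenEigenbasis

variable {M Q U J C : Matrix n n K} {lam : n → K}

theorem eigenvalues_unique (h : IsGenEigenbasis M Q U lam) {mu : n → K}
    (h' : M * U = Q * U * diagonal mu) : lam = mu := by
  refine diagonal_injective ?_
  calc diagonal lam = Uᵀ * Q * U * diagonal lam := by rw [h.transpose_mul_mul_self, one_mul]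
    _ = Uᵀ * (M * U) := by rw [h.mul_eq]; simp only [Matrix.mul_assoc]
    _ = diagonal mu := by rw [h', ← Matrix.mul_assoc, ← Matrix.mul_assoc,
          h.transpose_mul_mul_self, one_mul]

theorem mul_transpose_mul_self (h : IsGenEigenbasis M Q U lam) : U * (Uᵀ * Q) = 1 :=
  mul_eq_one_comm.mp h.transpose_mul_mul_self

theorem eigenvalue_ne_zero (h : IsGenEigenbasis M Q U lam) (hM : M.det ≠ 0) (k : n) :
    lam k ≠ 0 := by
  have hdet := congrArg det h.mul_eq
  rw [det_mul, det_mul, det_mul, det_diagonal] at hdet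
  have hU : U.det ≠ 0 := fun hU => by
    simpa [hU] using congrArg det h.transpose_mul_mul_self
  have hprod : ∏ i, lam i ≠ 0 := fun h0 => by simp_all
  exact Finset.prod_ne_zero_iff.mp hprod k (Finset.mem_univ k)

theorem eq_mul_diagonal_inv_mul_transpose (h : IsGenEigenbasis M Q U lam) (hCM : C * M = 1) :
    C = U * diagonal lam⁻¹ * Uᵀ := by
  have hlam : diagonal lam⁻¹ * diagonal lam = 1 := by
    rw [diagonal_mul_diagonal, ← diagonal_one]
    congr 1
    ext k
    exact inv_mul_cancel₀ (h.eigenvalue_ne_zero (det_ne_zero_of_left_inverse hCM) k)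
  have hM : M = Q * U * diagonal lam * (Uᵀ * Q) := by
    rw [← h.mul_eq, Matrix.mul_assoc, h.mul_transpose_mul_self, Matrix.mul_one]
  have hleft : U * diagonal lam⁻¹ * Uᵀ * M = 1 := by
    calc U * diagonal lam⁻¹ * Uᵀ * M
        = U * diagonal lam⁻¹ * (Uᵀ * Q * U) * diagonal lam * (Uᵀ * Q) := by
          rw [hM]; simp only [Matrix.mul_assoc]
      _ = 1 := by
          rw [h.transpose_mul_mul_self, Matrix.mul_one, Matrix.mul_assoc U, hlam, Matrix.mul_one,
            h.mul_transpose_mul_self]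
  rw [← inv_eq_left_inv hCM, inv_eq_left_inv hleft]

theorem transpose_mul_mul_eq (h : IsGenEigenbasis M Q U lam) (hCM : C * M = 1) :
    Uᵀ * Q * C = diagonal lam⁻¹ * Uᵀ := by
  rw [h.eq_mul_diagonal_inv_mul_transpose hCM, ← Matrix.mul_assoc, ← Matrix.mul_assoc,
    h.transpose_mul_mul_self, Matrix.one_mul]

theorem mul_submatrix_eq (h : IsGenEigenbasis M Q U lam) (σ : n → n) :
    M * U.submatrix id σ = Q * U.submatrix id σ * diagonal (lam ∘ σ) := by
  ext i k
  have := congrFun (congrFun h.mul_eq i) (σ k)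
  rw [mul_diagonal] at this ⊢
  simpa [mul_apply] using this

theorem mul_left_of_reflection (h : IsGenEigenbasis M Q U lam) (hJJ : J * J = 1)
    (hJt : Jᵀ = J) (hJQ : J * Q = Q * J) (hJMJ : J * M * J = (2 : K) • Q - M) :
    IsGenEigenbasis M Q (J * U) (2 - lam) := by
  refine ⟨?_, ?_⟩
  · calc (J * U)ᵀ * Q * (J * U) = Uᵀ * (J * Q * J) * U := by
          rw [transpose_mul, hJt]; simp only [Matrix.mul_assoc]
      _ = 1 := by
          rw [hJQ, Matrix.mul_assoc Q, hJJ, Matrix.mul_one, h.transpose_mul_mul_self]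
  · have hdiag : diagonal (2 - lam) = (2 : K) • 1 - diagonal lam := by
      ext i j
      by_cases hij : i = j <;> simp [hij, one_apply]
    calc M * (J * U) = J * (J * M * J) * U := by
          simp only [← Matrix.mul_assoc, hJJ, Matrix.one_mul]
      _ = (2 : K) • (Q * (J * U)) - J * (M * U) := by
          rw [hJMJ, Matrix.mul_sub, Matrix.sub_mul, Matrix.mul_smul, Matrix.smul_mul, hJQ]
          simp only [Matrix.mul_assoc]
      _ = Q * (J * U) * diagonal (2 - lam) := by
          rw [h.mul_eq, hdiag, Matrix.mul_sub, Matrix.mul_smul, Matrix.mul_one]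
          simp only [← Matrix.mul_assoc, hJQ]

theorem transpose_mul_mul_one_sub_mul_eq (h : IsGenEigenbasis M Q U lam) (hCM : C * M = 1)
    (hJt : Jᵀ = J) (hJQ : J * Q = Q * J) {σ : n → n} (hfold : J * U = U.submatrix id σ) :
    Uᵀ * (Q * (1 - J)) * C = diagonal lam⁻¹ * Uᵀ - (diagonal lam⁻¹ * Uᵀ).submatrix σ id := by
  have hflip : Uᵀ * (Q * J) * C = (Uᵀ * Q * C).submatrix σ id := by
    calc Uᵀ * (Q * J) * C = (J * U)ᵀ * Q * C := by
          rw [← hJQ, transpose_mul, hJt]; simp only [Matrix.mul_assoc]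
      _ = (Uᵀ * Q * C).submatrix σ id := by
          rw [hfold, transpose_submatrix, submatrix_mul _ _ σ id id Function.bijective_id,
            submatrix_mul _ _ σ id id Function.bijective_id, submatrix_id_id, submatrix_id_id]
  rw [Matrix.mul_sub, Matrix.mul_one, Matrix.mul_sub, Matrix.sub_mul, hflip,
    h.transpose_mul_mul_eq hCM]

variable {S : Finset n}

theorem apply_eq_two_sub (h : IsGenEigenbasis M (blockDiagPart S M) U lam) {σ : n → n}
    (hfold : blockSign S * U = U.submatrix id σ) (k : n) :
    lam (σ k) = 2 - lam k := by
  have hJU := h.mul_left_of_reflection (blockSign_mul_self S) (transpose_blockSign S)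
    (blockSign_mul_blockDiagPart S M) (blockSign_mul_mul_blockSign S M)
  exact (congrFun (hJU.eigenvalues_unique (hfold ▸ h.mul_submatrix_eq σ)) k).symm

theorem submatrix_compl_mul_eq [CharZero K] (h : IsGenEigenbasis M (blockDiagPart S M) U lam)
    (hCM : C * M = 1) {σ : n → n} (hfold : blockSign S * U = U.submatrix id σ) {ι : Type*}
    (e : ι → n) :
    (Uᵀ.submatrix e Subtype.val : Matrix ι {i // i ∉ S} K) *
        (M.submatrix Subtype.val Subtype.val : Matrix {i // i ∉ S} {i // i ∉ S} K) *
        (C.submatrix Subtype.val Subtype.val : Matrix {i // i ∉ S} {i // i ∉ S} K) =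
      of fun k (j : {i // i ∉ S}) => U j (e k) / (lam (e k) * (2 - lam (e k))) := by
  have hlam := h.eigenvalue_ne_zero (det_ne_zero_of_left_inverse hCM)
  have hσ := h.apply_eq_two_sub hfold
  have hfull := h.transpose_mul_mul_one_sub_mul_eq hCM (transpose_blockSign S)
    (blockSign_mul_blockDiagPart S M) hfold
  rw [← two_smul_diagonal_compl_mul_mul_diagonal_compl, Matrix.mul_smul, Matrix.smul_mul] at hfull
  rw [submatrix_mul_submatrix_subtype, submatrix_mul_submatrix_subtype]
  simp only [Matrix.mul_assoc] at hfull ⊢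
  ext k j
  have hUj : U j (σ (e k)) = -U j (e k) := by
    simpa [blockSign, j.2] using (congrFun (congrFun hfold j) (e k)).symm
  have h2 : 2 - lam (e k) ≠ 0 := hσ (e k) ▸ hlam (σ (e k))
  have hkj := congrFun (congrFun hfull (e k)) j
  simp only [Matrix.smul_apply, Matrix.sub_apply, submatrix_apply, diagonal_mul, transpose_apply,
    Pi.inv_apply, hσ, hUj, id, smul_eq_mul] at hkj
  rw [submatrix_apply, of_apply]
  field_simp [hlam (e k), h2] at hkj ⊢
  linear_combination (1 / 2 : K) * hkj

theorem apply_eq_two_mul_sum_lt_one [LinearOrder K] [IsStrictOrderedRing K]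
    (h : IsGenEigenbasis M (blockDiagPart S M) U lam) (hCM : C * M = 1) {σ : Equiv.Perm n}
    (hfold : blockSign S * U = U.submatrix id σ) {i j : n} (hi : i ∈ S) (hj : j ∉ S) :
    C i j = 2 * ∑ k : {k // lam k < 1}, (1 - lam k) * (U i k * U j k) / (lam k * (2 - lam k)) := by
  have hUσ : ∀ l k, U l (σ k) = (if l ∈ S then 1 else -1) * U l k := fun l k => by
    simpa [blockSign] using (congrFun (congrFun hfold l) k).symm
  rw [← sum_div_eq_two_mul_sum_lt_one σ lam (fun k => U i k * U j k) (h.apply_eq_two_sub hfold)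
    (fun k => by simp [hUσ, hi, hj]) (h.eigenvalue_ne_zero (det_ne_zero_of_left_inverse hCM)),
    h.eq_mul_diagonal_inv_mul_transpose hCM, mul_apply]
  simp only [mul_diagonal, transpose_apply, Pi.inv_apply]
  exact Finset.sum_congr rfl fun k _ => by ring

end IsGenEigenbasis

theorem mmse_is_low_freq_reconstruction_general
    {N : ℕ}
    (Sigma : Matrix (Fin N) (Fin N) ℝ) (hSigma : Sigma.PosDef)
    (M : Matrix (Fin N) (Fin N) ℝ) (hMdef : M = Sigma⁻¹)
    (S : Finset (Fin N))
    (J : Matrix (Fin N) (Fin N) ℝ)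
    (hJ : J = Matrix.diagonal (fun i => if i ∈ S then (1 : ℝ) else -1))
    (Q : Matrix (Fin N) (Fin N) ℝ)
    (hQ : ∀ i j, Q i j =
      if (i ∈ S ∧ j ∈ S) ∨ (i ∉ S ∧ j ∉ S) then M i j else 0)
    (lam : Fin N → ℝ)
    (U : Matrix (Fin N) (Fin N) ℝ)
    (hUQU : Uᵀ * Q * U = 1)
    (hMU : M * U = Q * U * Matrix.diagonal lam)
    (hfold : ∀ k : Fin N, (fun i => U i k.rev) = J.mulVec (fun i => U i k))
    (QSc : Matrix {i : Fin N // i ∉ S} {i : Fin N // i ∉ S} ℝ)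
    (hQSc : QSc = M.submatrix Subtype.val Subtype.val)
    (USL : Matrix {i : Fin N // i ∈ S} {k : Fin N // lam k < 1} ℝ)
    (hUSL : USL = U.submatrix Subtype.val Subtype.val)
    (UScL : Matrix {i : Fin N // i ∉ S} {k : Fin N // lam k < 1} ℝ)
    (hUScL : UScL = U.submatrix Subtype.val Subtype.val) :
    Sigma.submatrix (Subtype.val : {i : Fin N // i ∈ S} → Fin N)
          (Subtype.val : {i : Fin N // i ∉ S} → Fin N) *
        (Sigma.submatrix (Subtype.val : {i : Fin N // i ∉ S} → Fin N)
          (Subtype.val : {i : Fin N // i ∉ S} → Fin N))⁻¹ =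
      (2 : ℝ) • (USL *
        ((1 : Matrix {k : Fin N // lam k < 1} {k : Fin N // lam k < 1} ℝ) -
          Matrix.diagonal (fun k : {k : Fin N // lam k < 1} => lam k.val)) *
        UScLᵀ * QSc) := by
  have hCM : Sigma * M = 1 := hMdef ▸ mul_nonsing_inv Sigma hSigma.det_pos.ne'.isUnit
  obtain rfl : Q = blockDiagPart S M := by ext i j; exact hQ i j
  have hU : IsGenEigenbasis M (blockDiagPart S M) U lam := ⟨hUQU, hMU⟩
  have hJU : blockSign S * U = U.submatrix id Fin.revPerm := by
    ext i k
    simpa [blockSign, hJ, mulVec_diagonal] using (congrFun (hfold k) i).symm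
  have hSc := (hSigma.submatrix (Subtype.val_injective (p := (· ∉ S)))).det_pos.ne'.isUnit
  suffices hkey : Sigma.submatrix Subtype.val Subtype.val = (2 : ℝ) • (USL *
      (1 - diagonal fun k : {k // lam k < 1} => lam k.val) * (UScLᵀ * QSc *
        Sigma.submatrix (Subtype.val : {i // i ∉ S} → Fin N) Subtype.val)) by
    rw [hkey, Matrix.smul_mul]
    simp only [← Matrix.mul_assoc, mul_nonsing_inv_cancel_right _ _ hSc]
  rw [hUScL, hQSc, transpose_submatrix, hU.submatrix_compl_mul_eq hCM hJU, hUSL]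
  ext i j
  rw [submatrix_apply, hU.apply_eq_two_mul_sum_lt_one hCM hJU i.2 j.2, Matrix.smul_apply,
    smul_eq_mul, mul_apply]
  simp only [Matrix.mul_sub, Matrix.mul_one, Matrix.sub_apply, mul_diagonal, submatrix_apply,
    of_apply]
  exact congrArg _ (Finset.sum_congr rfl fun k _ => by ring)

/-- Theorem 3: for a zero-mean Gaussian with covariance Σ and precision
M = Σ⁻¹, the MMSE coefficient matrix for estimating x_S from x_{Sᶜ} is a
low-frequency subspace reconstruction with respect to the sampling-set-adaptive
GFT: Σ_{SSᶜ} (Σ_{SᶜSᶜ})⁻¹ = 2 U_{SL} (I − Λ_L) U_{SᶜL}ᵀ Q_{Sᶜ}. -/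
theorem mmse_is_low_freq_reconstruction
    {N : ℕ} (hN : 1 ≤ N)
    (Sigma : Matrix (Fin N) (Fin N) ℝ) (hSigma : Sigma.PosDef)
    (M : Matrix (Fin N) (Fin N) ℝ) (hMdef : M = Sigma⁻¹)
    (S : Finset (Fin N))
    (J : Matrix (Fin N) (Fin N) ℝ)
    (hJ : J = Matrix.diagonal (fun i => if i ∈ S then (1 : ℝ) else -1))
    (Q : Matrix (Fin N) (Fin N) ℝ)
    (hQ : ∀ i j, Q i j =
      if (i ∈ S ∧ j ∈ S) ∨ (i ∉ S ∧ j ∉ S) then M i j else 0)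
    (lam : Fin N → ℝ) (hlam : Monotone lam)
    (U : Matrix (Fin N) (Fin N) ℝ)
    (hUQU : Uᵀ * Q * U = 1)
    (hMU : M * U = Q * U * Matrix.diagonal lam)
    (hfold : ∀ k : Fin N, (fun i => U i k.rev) = J.mulVec (fun i => U i k))
    (hcard : Fintype.card {k : Fin N // lam k < 1} =
      Fintype.card {i : Fin N // i ∈ S})
    (QSc : Matrix {i : Fin N // i ∉ S} {i : Fin N // i ∉ S} ℝ)
    (hQSc : QSc = M.submatrix Subtype.val Subtype.val)
    (USL : Matrix {i : Fin N // i ∈ S} {k : Fin N // lam k < 1} ℝ)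
    (hUSL : USL = U.submatrix Subtype.val Subtype.val)
    (UScL : Matrix {i : Fin N // i ∉ S} {k : Fin N // lam k < 1} ℝ)
    (hUScL : UScL = U.submatrix Subtype.val Subtype.val) :
    Sigma.submatrix (Subtype.val : {i : Fin N // i ∈ S} → Fin N)
          (Subtype.val : {i : Fin N // i ∉ S} → Fin N) *
        (Sigma.submatrix (Subtype.val : {i : Fin N // i ∉ S} → Fin N)
          (Subtype.val : {i : Fin N // i ∉ S} → Fin N))⁻¹ =
      (2 : ℝ) • (USL *
        ((1 : Matrix {k : Fin N // lam k < 1} {k : Fin N // lam k < 1} ℝ) -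
          Matrix.diagonal (fun k : {k : Fin N // lam k < 1} => lam k.val)) *
        UScLᵀ * QSc) :=
  mmse_is_low_freq_reconstruction_general Sigma hSigma M hMdef S J hJ Q hQ lam U hUQU hMU hfold QSc
    hQSc USL hUSL UScL hUScL
end
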